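/- Let X be a Banach space, let η be a measure of non-compactness on X*, and let ε' > ε > 0. Then for every weak*-compact subset A of X*: [η^ω]'_{ε'}(A) ⊆ [η]^ω_ε(A) ⊆ [η^ω]'_ε(A). Moreover, for every n ∈ ℕ (n ≥ 1): [η^{ω^n}]'_{ε'}(A) ⊆ [η]^{ω^n}_ε(A) ⊆ [η^{ω^n}]'_ε(A). -/

import Mathlib

open Filter Topology Set Pointwise

noncomputable section

namespace Szlenk

variable {E : Type*}

/-- The fragment derivation `[η]'_ε(A)` associated to a set function `η`:
the points of `A` all of whose neighborhoods `U` satisfy `η (A ∩ cl U) ≥ ε`. -/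
def frag [TopologicalSpace E] (η : Set E → ℝ) (ε : ℝ) (A : Set E) : Set E :=
  {x | x ∈ A ∧ ∀ U ∈ 𝓝 x, ε ≤ η (A ∩ closure U)}

/-- Transfinite iterates `[η]^γ_ε(A)` of the fragment derivation. -/
def fragIter [TopologicalSpace E] (η : Set E → ℝ) (ε : ℝ) (A : Set E) (γ : Ordinal.{0}) :
    Set E :=
  Ordinal.limitRecOn γ A (fun _ S => frag η ε S)
    (fun γ _ ih => ⋂ β : {β : Ordinal.{0} // β < γ}, ih β.1 β.2)

/-- The `ω`-iterated measure `η^ω (A) = inf {ε > 0 : [η]^ω_ε(A) = ∅}`. -/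
def etaOmega [TopologicalSpace E] (η : Set E → ℝ) (A : Set E) : ℝ :=
  sInf {ε : ℝ | 0 < ε ∧ fragIter η ε A Ordinal.omega0 = ∅}

/-- The iterates `η^{ω^n}` (with `η^{ω^0} := η` and `η^{ω^{n+1}} := (η^{ω^n})^ω`). -/
def omegaPow [TopologicalSpace E] (η : Set E → ℝ) : ℕ → Set E → ℝ
  | 0 => η
  | n + 1 => etaOmega (omegaPow η n)

/-- `η` is a measure of non compactness (with respect to the closed unit ball `ball`):
it is nonnegative, vanishes on singletons, is monotone, satisfies
`η (A ∪ B) = max (η A) (η B)`, and `η (A + l • ball) ≤ η A + l * b` for some `b > 0`.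
All conditions are required on (weak*-)compact sets only. -/
structure IsMNCOn [TopologicalSpace E] [AddCommGroup E] [Module ℝ E]
    (ball : Set E) (η : Set E → ℝ) : Prop where
  nonneg : ∀ A : Set E, IsCompact A → 0 ≤ η A
  singleton : ∀ x : E, η {x} = 0
  mono : ∀ A B : Set E, IsCompact A → IsCompact B → A ⊆ B → η A ≤ η B
  union : ∀ A B : Set E, IsCompact A → IsCompact B → η (A ∪ B) = max (η A) (η B)
  ball_add : ∃ b > 0, ∀ A : Set E, IsCompact A → ∀ l : ℝ, 0 < l →
    η (A + l • ball) ≤ η A + l * b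

/-- `η` is a measure of non compactness with the explicit constant `b` in property (iii). -/
structure IsMNCWith [TopologicalSpace E] [AddCommGroup E] [Module ℝ E]
    (ball : Set E) (b : ℝ) (η : Set E → ℝ) : Prop where
  b_pos : 0 < b
  nonneg : ∀ A : Set E, IsCompact A → 0 ≤ η A
  singleton : ∀ x : E, η {x} = 0
  mono : ∀ A B : Set E, IsCompact A → IsCompact B → A ⊆ B → η A ≤ η B
  union : ∀ A B : Set E, IsCompact A → IsCompact B → η (A ∪ B) = max (η A) (η B)
  ball_add : ∀ A : Set E, IsCompact A → ∀ l : ℝ, 0 < l →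
    η (A + l • ball) ≤ η A + l * b

/-- A sublinear measure of non compactness: homogeneous and subadditive. -/
structure IsSublinear [TopologicalSpace E] [AddCommGroup E] [Module ℝ E]
    (η : Set E → ℝ) : Prop where
  homog : ∀ (l : ℝ) (A : Set E), IsCompact A → η (l • A) = |l| * η A
  subadd : ∀ A B : Set E, IsCompact A → IsCompact B → η (A + B) ≤ η A + η B

variable {X : Type*} [NormedAddCommGroup X] [NormedSpace ℝ X]

/-- The dual norm on `X*` (the dual being equipped with its weak* topology). -/
def dnorm (f : WeakDual ℝ X) : ℝ := ‖WeakDual.toStrongDual f‖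

/-- The closed unit ball of `X*`. -/
def dualBall (X : Type*) [NormedAddCommGroup X] [NormedSpace ℝ X] :
    Set (WeakDual ℝ X) := {f | dnorm f ≤ 1}

/-- The slice derivation `⟨η⟩'_ε(A)`: the points of `A` such that every weak*-closed
halfspace containing them meets `A` in a set of `η`-measure at least `ε`. -/
def sliceD (η : Set (WeakDual ℝ X) → ℝ) (ε : ℝ) (A : Set (WeakDual ℝ X)) :
    Set (WeakDual ℝ X) :=
  {x | x ∈ A ∧ ∀ (f : X) (c : ℝ), c ≤ x f → ε ≤ η (A ∩ {y | c ≤ y f})}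

/-- Transfinite iterates `⟨η⟩^γ_ε(A)` of the slice derivation. -/
def sliceIter (η : Set (WeakDual ℝ X) → ℝ) (ε : ℝ) (A : Set (WeakDual ℝ X))
    (γ : Ordinal.{0}) : Set (WeakDual ℝ X) :=
  Ordinal.limitRecOn γ A (fun _ S => sliceD η ε S)
    (fun γ _ ih => ⋂ β : {β : Ordinal.{0} // β < γ}, ih β.1 β.2)

/-- A weak*-closed halfspace of `X*`. -/
def IsHalfspace (H : Set (WeakDual ℝ X)) : Prop :=
  ∃ (f : X) (c : ℝ), H = {y : WeakDual ℝ X | c ≤ y f}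

/-- The Kuratowski measure of non compactness associated to a (dual) norm `Nd`:
the infimum of all `ε > 0` such that `A` can be covered by finitely many balls of
diameter `ε` (i.e. of radius `ε / 2`). -/
def kurN (Nd : WeakDual ℝ X → ℝ) (A : Set (WeakDual ℝ X)) : ℝ :=
  sInf {ε : ℝ | 0 < ε ∧
    ∃ F : Finset (WeakDual ℝ X), A ⊆ ⋃ c ∈ F, {y | Nd (y - c) ≤ ε / 2}}

/-- The Kuratowski measure of non compactness on `X*`. -/
def kur (A : Set (WeakDual ℝ X)) : ℝ := kurN dnorm A

/-- The iterated sets `A^ε_β` of the convex Szlenk derivation: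
`A^ε_{β+1}` is the weak*-closed convex hull of `[σ]'_ε(A^ε_β)`. -/
def convIter (ε : ℝ) (K : Set (WeakDual ℝ X)) (γ : Ordinal.{0}) : Set (WeakDual ℝ X) :=
  Ordinal.limitRecOn γ K (fun _ S => closure (convexHull ℝ (frag kur ε S)))
    (fun γ _ ih => ⋂ β : {β : Ordinal.{0} // β < γ}, ih β.1 β.2)

/-- The families `𝒯_α` of trees on `ℕ`. A tree is a set of finite sequences of
naturals (closed under initial segments); the root is the empty sequence, and
`(n)⌢s` is represented by `n :: s`. `𝒯_0 = {{∅}}`, and `T ∈ 𝒯_α` for `α ≥ 1` if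
`T = {∅} ∪ ⋃_k (n_k)⌢T_k` with `n_k` strictly increasing, `T_k ∈ 𝒯_{α_k}`, where
`α_k = β` for all `k` if `α = β + 1`, and `α_k ↗ α` if `α` is a limit ordinal. -/
inductive IsTreeFam : Ordinal.{0} → Set (List ℕ) → Prop
  | zero : IsTreeFam 0 {[]}
  | node {α : Ordinal.{0}} (nk : ℕ → ℕ) (αk : ℕ → Ordinal.{0}) (Tk : ℕ → Set (List ℕ))
      (hnk : StrictMono nk) (hTk : ∀ k, IsTreeFam (αk k) (Tk k))
      (hα : (∃ β, α = β + 1 ∧ ∀ k, αk k = β) ∨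
            (Order.IsSuccLimit α ∧ StrictMono αk ∧ α = ⨆ k, αk k)) :
      IsTreeFam α ({[]} ∪ ⋃ k, (List.cons (nk k)) '' Tk k)

/-- A family `(x_s)_{s ∈ T}` is weak*-continuous: `x_{s⌢n} → x_s` (in the ambient,
i.e. weak*, topology) along the children of every node `s` of `T`. -/
def IsContFam [TopologicalSpace E] (T : Set (List ℕ)) (x : List ℕ → E) : Prop :=
  ∀ s ∈ T, Tendsto (fun n : ℕ => x (s ++ [n]))
    (atTop ⊓ 𝓟 {n : ℕ | s ++ [n] ∈ T}) (𝓝 (x s))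

/-- A family `(x_s)_{s ∈ T}` in `X*` is `ε`-separated: `‖x_s - x_{s⌢n}‖ ≥ ε`. -/
def IsSepFam (ε : ℝ) (T : Set (List ℕ)) (x : List ℕ → WeakDual ℝ X) : Prop :=
  ∀ s ∈ T, ∀ n : ℕ, s ++ [n] ∈ T → ε ≤ dnorm (x s - x (s ++ [n]))

/-- Norm distance from a point of `X*` to a subset of `X*`. -/
def ddist (f : WeakDual ℝ X) (A : Set (WeakDual ℝ X)) : ℝ :=
  sInf ((fun g => dnorm (f - g)) '' A)

/-- The product `η₁ × η₂` of two measures of non compactness. -/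
def prodMNC {X₁ X₂ : Type*} [NormedAddCommGroup X₁] [NormedSpace ℝ X₁]
    [NormedAddCommGroup X₂] [NormedSpace ℝ X₂]
    (η₁ : Set (WeakDual ℝ X₁) → ℝ) (η₂ : Set (WeakDual ℝ X₂) → ℝ)
    (A : Set (WeakDual ℝ X₁ × WeakDual ℝ X₂)) : ℝ :=
  sInf {ε : ℝ | 0 < ε ∧ ∃ (n : ℕ) (A₁ : Fin n → Set (WeakDual ℝ X₁))
      (A₂ : Fin n → Set (WeakDual ℝ X₂)),
      (∀ i, IsCompact (A₁ i) ∧ IsCompact (A₂ i) ∧ η₁ (A₁ i) < ε ∧ η₂ (A₂ i) < ε) ∧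
      A ⊆ ⋃ i, A₁ i ×ˢ A₂ i}

/-- The dual norm on `X*` associated to an (equivalent) norm `N` on `X`. -/
def dualNormOf (N : X → ℝ) (f : WeakDual ℝ X) : ℝ :=
  sSup ((fun x => f x) '' {x : X | N x ≤ 1})

/-- The closed unit ball of the dual norm associated to a norm `N` on `X`. -/
def dualBallOf (N : X → ℝ) : Set (WeakDual ℝ X) :=
  {f : WeakDual ℝ X | ∀ x : X, |f x| ≤ N x}
/-!
The right-hand inclusions come from localization: in a regular space a point of `[η]^γ_ε(A)`
lying in an open set `U` stays in `[η]^γ_ε(A ∩ cl U)`, so `[η]^ω_δ(A ∩ cl U)` is nonempty for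
`δ ≤ ε` and `η^ω(A ∩ cl U) ≥ ε`. Conversely, if `η^ω(A ∩ cl U) ≥ ε' > ε` for every neighbourhood
`U` of `x ∈ A`, every finite derived set `[η]^k_ε(A ∩ cl U)` is nonempty, so
`η([η]^k_ε(A) ∩ cl U) ≥ ε` and `x` lies in every `[η]^k_ε(A)`.
Since `[η]^{α·ω}_ε(A) = ⋂ₖ Dᵏ(A)` with `D = [η]^α_ε`, squeezing `D` between `[η^{ω^n}]'_{ε''}`
and `[η^{ω^n}]'_ε` squeezes `[η]^{ω^{n+1}}_ε(A)` between `[η^{ω^n}]^ω_{ε''}(A)` and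
`[η^{ω^n}]^ω_ε(A)`, and the case `ω` applied to `η^{ω^n}` gives the induction step.
-/

theorem iterate_le_iterate_of_le_on {α : Type*} [Preorder α] {s : Set α} {f g : α → α}
    (hf : MapsTo f s s) (hg : MapsTo g s s) (hgm : MonotoneOn g s)
    (hfg : ∀ x ∈ s, f x ≤ g x) {x : α} (hx : x ∈ s) (n : ℕ) : f^[n] x ≤ g^[n] x := by
  induction n with
  | zero => exact le_rfl
  | succ n ih =>
    rw [Function.iterate_succ_apply', Function.iterate_succ_apply']
    exact (hfg _ (hf.iterate n hx)).trans (hgm (hf.iterate n hx) (hg.iterate n hx) ih)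

section Derivation

variable [TopologicalSpace E] {η ζ : Set E → ℝ} {ε ε' δ : ℝ} {A B : Set E} {x : E}

lemma frag_subset : frag η ε A ⊆ A := fun _ hx => hx.1

lemma le_of_frag_nonempty (h : (frag η ε A).Nonempty) : ε ≤ η A := by
  obtain ⟨x, -, hx⟩ := h
  simpa using hx univ univ_mem

lemma isCompact_frag (hA : IsCompact A) : IsCompact (frag η ε A) := by
  have hopen : IsOpen {x : E | ∃ U ∈ 𝓝 x, η (A ∩ closure U) < ε} := by
    refine isOpen_iff_mem_nhds.2 fun x ⟨U, hU, hUε⟩ => ?_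
    filter_upwards [interior_mem_nhds.2 hU] with y hy
    exact ⟨U, mem_interior_iff_mem_nhds.1 hy, hUε⟩
  have hfrag : frag η ε A = A ∩ {x : E | ∃ U ∈ 𝓝 x, η (A ∩ closure U) < ε}ᶜ := by
    ext; simp [frag]
  exact hfrag ▸ hA.inter_right hopen.isClosed_compl

lemma frag_subset_frag (hm : MonotoneOn η {A | IsCompact A}) (hA : IsCompact A)
    (hB : IsCompact B) (hAB : A ⊆ B) (hδε : δ ≤ ε) : frag η ε A ⊆ frag η δ B :=
  fun _ ⟨hxA, hx⟩ => ⟨hAB hxA, fun U hU => hδε.trans <| (hx U hU).trans <|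
    hm (hA.inter_right isClosed_closure) (hB.inter_right isClosed_closure)
      (inter_subset_inter_left _ hAB)⟩

lemma fragIter_zero : fragIter η ε A 0 = A :=
  Ordinal.limitRecOn_zero ..

lemma fragIter_add_one (γ : Ordinal.{0}) :
    fragIter η ε A (γ + 1) = frag η ε (fragIter η ε A γ) :=
  Ordinal.limitRecOn_add_one ..

lemma fragIter_one : fragIter η ε A 1 = frag η ε A := by
  rw [← zero_add 1, fragIter_add_one, fragIter_zero]

lemma fragIter_limit {γ : Ordinal.{0}} (hγ : Order.IsSuccLimit γ) :
    fragIter η ε A γ = ⋂ β : {β : Ordinal.{0} // β < γ}, fragIter η ε A β.1 :=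
  Ordinal.limitRecOn_limit _ _ _ _ hγ

lemma fragIter_antitone : Antitone (fragIter η ε A) := by
  intro β γ h
  induction γ using Ordinal.limitRecOn with
  | zero => rw [nonpos_iff_eq_zero.1 h]
  | add_one γ ih =>
    rcases h.eq_or_lt with rfl | h
    · exact Subset.rfl
    · rw [fragIter_add_one]
      exact frag_subset.trans (ih (Order.lt_add_one_iff.1 h))
  | limit γ hγ _ =>
    rcases h.eq_or_lt with rfl | h
    · exact Subset.rfl
    · rw [fragIter_limit hγ]
      exact iInter_subset (fun b : {b // b < γ} => fragIter η ε A b.1) ⟨β, h⟩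

lemma fragIter_subset (γ : Ordinal.{0}) : fragIter η ε A γ ⊆ A :=
  fragIter_zero.subset.trans' (fragIter_antitone zero_le)

lemma isCompact_fragIter [T2Space E] (hA : IsCompact A) (γ : Ordinal.{0}) :
    IsCompact (fragIter η ε A γ) := by
  induction γ using Ordinal.limitRecOn with
  | zero => rwa [fragIter_zero]
  | add_one γ ih => rw [fragIter_add_one]; exact isCompact_frag ih
  | limit γ hγ ih =>
    rw [fragIter_limit hγ]
    exact hA.of_isClosed_subset (isClosed_iInter fun β => (ih β.1 β.2).isClosed)
      ((fragIter_limit hγ).symm.subset.trans (fragIter_subset γ))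

lemma fragIter_subset_fragIter [T2Space E] (hm : MonotoneOn η {A | IsCompact A})
    (hA : IsCompact A) (hB : IsCompact B) (hAB : A ⊆ B) (hδε : δ ≤ ε) (γ : Ordinal.{0}) :
    fragIter η ε A γ ⊆ fragIter η δ B γ := by
  induction γ using Ordinal.limitRecOn with
  | zero => rwa [fragIter_zero, fragIter_zero]
  | add_one γ ih =>
    rw [fragIter_add_one, fragIter_add_one]
    exact frag_subset_frag hm (isCompact_fragIter hA γ) (isCompact_fragIter hB γ) ih hδε
  | limit γ hγ ih =>
    rw [fragIter_limit hγ, fragIter_limit hγ]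
    exact iInter_mono fun β => ih β.1 β.2

lemma fragIter_inter_subset [T2Space E] (hm : MonotoneOn η {A | IsCompact A})
    (hA : IsCompact A) {C : Set E} (hC : IsClosed C) (γ : Ordinal.{0}) :
    fragIter η ε (A ∩ C) γ ⊆ fragIter η ε A γ ∩ C :=
  subset_inter (fragIter_subset_fragIter hm (hA.inter_right hC) hA inter_subset_left le_rfl γ)
    ((fragIter_subset γ).trans inter_subset_right)

lemma fragIter_add (α β : Ordinal.{0}) :
    fragIter η ε A (α + β) = fragIter η ε (fragIter η ε A α) β := by
  induction β using Ordinal.limitRecOn with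
  | zero => rw [add_zero, fragIter_zero]
  | add_one β ih => rw [← add_assoc, fragIter_add_one, fragIter_add_one, ih]
  | limit β hβ ih =>
    rw [fragIter_limit hβ, fragIter_limit (Ordinal.isSuccLimit_add α hβ)]
    refine Subset.antisymm (subset_iInter fun ⟨b, hb⟩ => ?_) (subset_iInter fun ⟨c, hc⟩ => ?_)
    · rw [← ih b hb]
      exact iInter_subset_of_subset ⟨α + b, (add_lt_add_iff_left α).2 hb⟩ Subset.rfl
    · obtain ⟨d, hd, hcd⟩ := (Ordinal.lt_add_iff hβ.ne_bot).1 hc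
      exact (iInter_subset _ ⟨d, hd⟩).trans ((ih d hd).symm.subset.trans (fragIter_antitone hcd))

lemma fragIter_mul_natCast (α : Ordinal.{0}) (n : ℕ) :
    fragIter η ε A (α * n) = (fun B => fragIter η ε B α)^[n] A := by
  induction n with
  | zero => rw [Nat.cast_zero, mul_zero, fragIter_zero, Function.iterate_zero_apply]
  | succ n ih =>
    rw [Nat.cast_succ, mul_add_one, fragIter_add, ih, Function.iterate_succ_apply']

lemma fragIter_mul_omega0 {α : Ordinal.{0}} (hα : α ≠ 0) :
    fragIter η ε A (α * Ordinal.omega0) = ⋂ n : ℕ, (fun B => fragIter η ε B α)^[n] A := by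
  rw [fragIter_limit (Ordinal.isSuccLimit_mul_right hα.bot_lt Ordinal.isSuccLimit_omega0)]
  refine Subset.antisymm (subset_iInter fun n => ?_) (subset_iInter fun ⟨β, hβ⟩ => ?_)
  · rw [← fragIter_mul_natCast]
    exact iInter_subset_of_subset
      ⟨α * n, mul_lt_mul_of_pos_left (Ordinal.natCast_lt_omega0 n) hα.bot_lt⟩ Subset.rfl
  · obtain ⟨c, hc, hβc⟩ := (Ordinal.lt_mul_iff_of_isSuccLimit Ordinal.isSuccLimit_omega0).1 hβ
    obtain ⟨n, rfl⟩ := Ordinal.lt_omega0.1 hc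
    exact (iInter_subset _ n).trans
      ((fragIter_mul_natCast α n).symm.subset.trans (fragIter_antitone hβc.le))

lemma fragIter_omega0 : fragIter η ε A Ordinal.omega0 = ⋂ n : ℕ, (frag η ε)^[n] A := by
  have h := fragIter_mul_omega0 (η := η) (ε := ε) (A := A) one_ne_zero
  simpa only [one_mul, fragIter_one] using h

lemma mem_fragIter_of_forall_nonempty [T2Space E] (hm : MonotoneOn η {A | IsCompact A})
    (hA : IsCompact A) (hxA : x ∈ A) {γ : Ordinal.{0}}
    (h : ∀ U ∈ 𝓝 x, (fragIter η ε (A ∩ closure U) γ).Nonempty) : x ∈ fragIter η ε A γ := by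
  suffices ∀ β ≤ γ, x ∈ fragIter η ε A β from this γ le_rfl
  intro β hβ
  induction β using Ordinal.limitRecOn with
  | zero => rwa [fragIter_zero]
  | add_one β ih =>
    rw [fragIter_add_one]
    refine ⟨ih (le_self_add.trans hβ), fun U hU => ?_⟩
    have hne : (frag η ε (fragIter η ε (A ∩ closure U) β)).Nonempty := by
      rw [← fragIter_add_one]
      exact (h U hU).mono (fragIter_antitone hβ)
    calc ε ≤ η (fragIter η ε (A ∩ closure U) β) := le_of_frag_nonempty hne
      _ ≤ η (fragIter η ε A β ∩ closure U) :=
        hm (isCompact_fragIter (hA.inter_right isClosed_closure) β)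
          ((isCompact_fragIter hA β).inter_right isClosed_closure)
          (fragIter_inter_subset hm hA isClosed_closure β)
  | limit β hβl ih =>
    rw [fragIter_limit hβl]
    exact mem_iInter.2 fun b => ih b.1 b.2 (b.2.le.trans hβ)

lemma mem_fragIter_inter_closure [T2Space E] [RegularSpace E]
    (hm : MonotoneOn η {A | IsCompact A}) (hA : IsCompact A) {U : Set E} (hU : IsOpen U)
    (γ : Ordinal.{0}) (hx : x ∈ fragIter η ε A γ) (hxU : x ∈ U) :
    x ∈ fragIter η ε (A ∩ closure U) γ := by
  induction γ using Ordinal.limitRecOn generalizing x with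
  | zero =>
    rw [fragIter_zero] at hx ⊢
    exact ⟨hx, subset_closure hxU⟩
  | add_one γ ih =>
    rw [fragIter_add_one] at hx ⊢
    obtain ⟨hxγ, hxε⟩ := hx
    obtain ⟨C, hC, hCclosed, hCU⟩ := exists_mem_nhds_isClosed_subset (hU.mem_nhds hxU)
    refine ⟨ih hxγ hxU, fun W hW => (hxε _ (inter_mem hW (interior_mem_nhds.2 hC))).trans ?_⟩
    refine hm ((isCompact_fragIter hA γ).inter_right isClosed_closure)
      ((isCompact_fragIter (hA.inter_right isClosed_closure) γ).inter_right isClosed_closure) ?_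
    rintro y ⟨hyγ, hy⟩
    have hyC : y ∈ C := closure_minimal interior_subset hCclosed
      (closure_mono inter_subset_right hy)
    exact ⟨ih hyγ (hCU hyC), closure_mono inter_subset_left hy⟩
  | limit γ hγ ih =>
    rw [fragIter_limit hγ] at hx ⊢
    exact mem_iInter.2 fun b => ih b.1 b.2 (mem_iInter.1 hx b) hxU

lemma exists_fragIter_omega0_eq_empty (η : Set E → ℝ) (A : Set E) :
    ∃ δ, 0 < δ ∧ fragIter η δ A Ordinal.omega0 = ∅ := by
  refine ⟨max (η A) 0 + 1, by positivity, subset_empty_iff.1 ?_⟩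
  refine (fragIter_antitone Ordinal.one_lt_omega0.le).trans (fragIter_one.subset.trans ?_)
  intro x hx
  have := le_of_frag_nonempty ⟨x, hx⟩
  linarith [le_max_left (η A) 0]

lemma etaOmega_le (hε : 0 < ε) (h : fragIter η ε A Ordinal.omega0 = ∅) :
    etaOmega η A ≤ ε :=
  csInf_le ⟨0, fun _ hδ => hδ.1.le⟩ ⟨hε, h⟩

lemma le_etaOmega (h : ∀ δ, 0 < δ → fragIter η δ A Ordinal.omega0 = ∅ → ε ≤ δ) :
    ε ≤ etaOmega η A :=
  le_csInf (exists_fragIter_omega0_eq_empty η A) fun δ hδ => h δ hδ.1 hδ.2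

lemma etaOmega_monotoneOn [T2Space E] (hm : MonotoneOn η {A | IsCompact A}) :
    MonotoneOn (etaOmega η) {A | IsCompact A} := fun _ hA _ hB hAB =>
  le_etaOmega fun _ hδ hB0 => etaOmega_le hδ <| subset_empty_iff.1 <|
    hB0 ▸ fragIter_subset_fragIter hm hA hB hAB le_rfl _

lemma omegaPow_monotoneOn [T2Space E] (hm : MonotoneOn η {A | IsCompact A}) :
    ∀ n, MonotoneOn (omegaPow η n) {A | IsCompact A}
  | 0 => hm
  | n + 1 => etaOmega_monotoneOn (omegaPow_monotoneOn hm n)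

lemma frag_etaOmega_subset_fragIter_omega0 [T2Space E] (hm : MonotoneOn η {A | IsCompact A})
    (hε : 0 < ε) (hεε' : ε < ε') (hA : IsCompact A) :
    frag (etaOmega η) ε' A ⊆ fragIter η ε A Ordinal.omega0 := by
  rintro x ⟨hxA, hx⟩
  refine mem_fragIter_of_forall_nonempty hm hA hxA fun U hU => ?_
  by_contra hempty
  linarith [hx U hU, etaOmega_le hε (not_nonempty_iff_eq_empty.1 hempty)]

lemma fragIter_omega0_subset_frag_etaOmega [T2Space E] [RegularSpace E]
    (hm : MonotoneOn η {A | IsCompact A}) (hA : IsCompact A) :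
    fragIter η ε A Ordinal.omega0 ⊆ frag (etaOmega η) ε A := by
  intro x hx
  refine ⟨fragIter_subset _ hx, fun U hU => le_etaOmega fun δ _ hδU => ?_⟩
  by_contra! hδε
  have hxU : x ∈ fragIter η ε (A ∩ closure (interior U)) Ordinal.omega0 :=
    mem_fragIter_inter_closure hm hA isOpen_interior _ hx (mem_interior_iff_mem_nhds.2 hU)
  have := fragIter_subset_fragIter hm (hA.inter_right isClosed_closure)
    (hA.inter_right isClosed_closure) (inter_subset_inter_right _ (closure_mono interior_subset))
    hδε.le _ hxU
  rwa [hδU] at this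

def FragSandwich (ζ η : Set E → ℝ) (α : Ordinal.{0}) : Prop :=
  ∀ ε ε' : ℝ, 0 < ε → ε < ε' → ∀ A : Set E, IsCompact A →
    frag ζ ε' A ⊆ fragIter η ε A α ∧ fragIter η ε A α ⊆ frag ζ ε A

lemma fragSandwich_one (hm : MonotoneOn η {A | IsCompact A}) : FragSandwich η η 1 :=
  fun _ _ _ hεε' _ hA => by
    rw [fragIter_one]
    exact ⟨frag_subset_frag hm hA hA Subset.rfl hεε'.le, Subset.rfl⟩

lemma FragSandwich.etaOmega_mul_omega0 [T2Space E] [RegularSpace E] {α : Ordinal.{0}} (hα : α ≠ 0)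
    (hm : MonotoneOn η {A | IsCompact A}) (hζ : MonotoneOn ζ {A | IsCompact A})
    (h : FragSandwich ζ η α) : FragSandwich (etaOmega ζ) η (α * Ordinal.omega0) := by
  intro ε ε' hε hεε' A hA
  have hfrag (δ : ℝ) : MapsTo (frag ζ δ) {B | IsCompact B} {B | IsCompact B} :=
    fun _ hB => isCompact_frag hB
  have hD : MapsTo (fun B => fragIter η ε B α) {B | IsCompact B} {B | IsCompact B} :=
    fun _ hB => isCompact_fragIter hB α
  have hDm : MonotoneOn (fun B => fragIter η ε B α) {B | IsCompact B} :=
    fun B hB C hC hBC => fragIter_subset_fragIter hm hB hC hBC le_rfl α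
  obtain ⟨ε'', hεε'', hε''ε'⟩ := exists_between hεε'
  rw [fragIter_mul_omega0 hα]
  constructor
  · calc frag (etaOmega ζ) ε' A ⊆ fragIter ζ ε'' A Ordinal.omega0 :=
          frag_etaOmega_subset_fragIter_omega0 hζ (hε.trans hεε'') hε''ε' hA
      _ = ⋂ n : ℕ, (frag ζ ε'')^[n] A := fragIter_omega0
      _ ⊆ ⋂ n : ℕ, (fun B => fragIter η ε B α)^[n] A := iInter_mono <|
          iterate_le_iterate_of_le_on (hfrag ε'') hD hDm
            (fun B hB => (h ε ε'' hε hεε'' B hB).1) hA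
  · calc ⋂ n : ℕ, (fun B => fragIter η ε B α)^[n] A ⊆ ⋂ n : ℕ, (frag ζ ε)^[n] A :=
          iInter_mono <| iterate_le_iterate_of_le_on hD (hfrag ε)
            (fun B hB C hC hBC => frag_subset_frag hζ hB hC hBC le_rfl)
            (fun B hB => (h ε (ε + 1) hε (lt_add_one ε) B hB).2) hA
      _ = fragIter ζ ε A Ordinal.omega0 := fragIter_omega0.symm
      _ ⊆ frag (etaOmega ζ) ε A := fragIter_omega0_subset_frag_etaOmega hζ hA

lemma fragSandwich_omegaPow [T2Space E] [RegularSpace E] (hm : MonotoneOn η {A | IsCompact A})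
    (n : ℕ) : FragSandwich (omegaPow η n) η (Ordinal.omega0 ^ (n : Ordinal.{0})) := by
  induction n with
  | zero => simpa only [Nat.cast_zero, Ordinal.opow_zero, omegaPow] using fragSandwich_one hm
  | succ n ih =>
    rw [Nat.cast_succ, Ordinal.opow_add, Ordinal.opow_one]
    exact ih.etaOmega_mul_omega0 (Ordinal.opow_ne_zero _ Ordinal.omega0_ne_zero) hm
      (omegaPow_monotoneOn hm n)

end Derivation

theorem frag_etaOmega_sandwich_general
    {X : Type*} [NormedAddCommGroup X] [NormedSpace ℝ X]
    (η : Set (WeakDual ℝ X) → ℝ) (hη : IsMNCOn (dualBall X) η)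
    (ε ε' : ℝ) (hε : 0 < ε) (hεε' : ε < ε')
    (A : Set (WeakDual ℝ X)) (hA : IsCompact A) :
    (frag (etaOmega η) ε' A ⊆ fragIter η ε A Ordinal.omega0 ∧
      fragIter η ε A Ordinal.omega0 ⊆ frag (etaOmega η) ε A) ∧
    (∀ n : ℕ, 1 ≤ n →
      frag (omegaPow η n) ε' A ⊆ fragIter η ε A (Ordinal.omega0 ^ (n : Ordinal.{0})) ∧
      fragIter η ε A (Ordinal.omega0 ^ (n : Ordinal.{0})) ⊆ frag (omegaPow η n) ε A) := by
  have hsandwich := fragSandwich_omegaPow (fun B hB C hC hBC => hη.mono B C hB hC hBC)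
  refine ⟨?_, fun n _ => hsandwich n ε ε' hε hεε' A hA⟩
  simpa only [Nat.cast_one, Ordinal.opow_one, omegaPow] using hsandwich 1 ε ε' hε hεε' A hA

/-- For a measure of non compactness `η` on `X*`, `ε' > ε > 0` and `A` weak*-compact:
`[η^ω]'_{ε'}(A) ⊆ [η]^ω_ε(A) ⊆ [η^ω]'_ε(A)`, and for every `n ≥ 1`,
`[η^{ω^n}]'_{ε'}(A) ⊆ [η]^{ω^n}_ε(A) ⊆ [η^{ω^n}]'_ε(A)`. -/
theorem frag_etaOmega_sandwich
    {X : Type*} [NormedAddCommGroup X] [NormedSpace ℝ X] [CompleteSpace X]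
    (η : Set (WeakDual ℝ X) → ℝ) (hη : IsMNCOn (dualBall X) η)
    (ε ε' : ℝ) (hε : 0 < ε) (hεε' : ε < ε')
    (A : Set (WeakDual ℝ X)) (hA : IsCompact A) :
    (frag (etaOmega η) ε' A ⊆ fragIter η ε A Ordinal.omega0 ∧
      fragIter η ε A Ordinal.omega0 ⊆ frag (etaOmega η) ε A) ∧
    (∀ n : ℕ, 1 ≤ n →
      frag (omegaPow η n) ε' A ⊆ fragIter η ε A (Ordinal.omega0 ^ (n : Ordinal.{0})) ∧
      fragIter η ε A (Ordinal.omega0 ^ (n : Ordinal.{0})) ⊆ frag (omegaPow η n) ε A) :=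
  frag_etaOmega_sandwich_general η hη ε ε' hε hεε' A hA

end Szlenk
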